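/- Let f : ℝ^n → ℝ ∪ {∞} be proper, convex, closed (possibly with μ_f = 0, i.e., merely convex, or μ_f-strongly convex), A ∈ ℝ^{m×n}, and τσ‖A‖² < 1 with Φ_{τ,σ} = [[(1/τ)Iₙ,-Aᵀ],[-A,(1/σ)I_m]] ≻ 0. Let F_b(x,y) = (∂f(x)+Aᵀy, -Ax) and let J = (Id + Φ_{τ,σ}^{-1}F_b)^{-1} be the (single-valued) resolvent. Then for all ω, ω' ∈ ℝ^{n+m}, ‖J(ω) - J(ω')‖²_{Φ_{τ,σ} + Ψ_b} ≤ ‖ω - ω'‖²_{Φ_{τ,σ}}, where Ψ_b = diag(γ_x Iₙ, 0_{m×m}) with γ_x = λ_min(Φ_{τ,σ}^{-1}) λ_min(AᵀA) + 2μ_f. -/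

import Mathlib

noncomputable section
open Matrix

abbrev Evec (n : ℕ) := EuclideanSpace ℝ (Fin n)

/-- The operator (spectral) norm of a matrix. -/
noncomputable def opNorm {m n : ℕ} (A : Matrix (Fin m) (Fin n) ℝ) : ℝ :=
  ‖(Matrix.toEuclideanLin A).toContinuousLinearMap‖

noncomputable def qform {ι : Type*} [Fintype ι] [DecidableEq ι]
    (M : Matrix ι ι ℝ) (v : EuclideanSpace ℝ ι) : ℝ :=
  inner ℝ (Matrix.toEuclideanLin M v) v

noncomputable def lambdaMin {ι : Type*} [Fintype ι] [DecidableEq ι]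
    (M : Matrix ι ι ℝ) : ℝ :=
  ⨅ v : Metric.sphere (0 : EuclideanSpace ℝ ι) 1, qform M (v : EuclideanSpace ℝ ι)

/-- The convex subdifferential of an extended-real-valued function. -/
def subdiff {n : ℕ} (f : Evec n → EReal) (x : Evec n) : Set (Evec n) :=
  {v | ∀ z, f x + (((inner ℝ v (z - x) : ℝ)) : EReal) ≤ f z}

/-- The inner product weighted by `Φ_{τ,σ} = [[(1/τ)Iₙ,-Aᵀ],[-A,(1/σ)I_m]]`. -/
noncomputable def wPhi {n m : ℕ} (τ σ : ℝ) (A : Matrix (Fin m) (Fin n) ℝ)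
    (u v : Evec n × Evec m) : ℝ :=
  (inner ℝ (τ⁻¹ • u.1 - Matrix.toEuclideanLin Aᵀ u.2) v.1 : ℝ) +
    (inner ℝ (σ⁻¹ • u.2 - Matrix.toEuclideanLin A u.1) v.2 : ℝ)

/-- The block matrix `Φ_{τ,σ}`. -/
noncomputable def PhiMat {n m : ℕ} (τ σ : ℝ) (A : Matrix (Fin m) (Fin n) ℝ) :
    Matrix (Fin n ⊕ Fin m) (Fin n ⊕ Fin m) ℝ :=
  Matrix.fromBlocks (τ⁻¹ • (1 : Matrix (Fin n) (Fin n) ℝ)) (-Aᵀ) (-A)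
    (σ⁻¹ • (1 : Matrix (Fin m) (Fin m) ℝ))

/-!
Write `δ = Jω - Jω'` and `r = (ω - Jω) - (ω' - Jω')`, so that `ω - ω' = δ + r` and
`‖ω - ω'‖²_Φ = ‖δ‖²_Φ + 2⟨r, δ⟩_Φ + ‖r‖²_Φ`. The resolvent equation gives
`Φ r = (g - g' + Aᵀ δ_y, -A δ_x)` with subgradients `g ∈ ∂f(Jω)_x`, `g' ∈ ∂f(Jω')_x`; the skew part
of `F_b` drops out of `⟨r, δ⟩_Φ`, leaving `⟨g - g', δ_x⟩ ≥ μ_f ‖δ_x‖²`. Moreover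
`‖r‖²_Φ = ‖Φ r‖²_{Φ⁻¹} ≥ λ_min(Φ⁻¹) ‖A δ_x‖² ≥ λ_min(Φ⁻¹) λ_min(AᵀA) ‖δ_x‖²`, where
`λ_min(Φ⁻¹) ≥ 0` because `τσ‖A‖² < 1` makes `Φ` positive definite (complete the square in
`τ⁻¹a² + σ⁻¹b² - 2‖A‖ab`).
-/

section lambdaMin

variable {ι : Type*} [Fintype ι] [DecidableEq ι]

lemma qform_smul (M : Matrix ι ι ℝ) (c : ℝ) (v : EuclideanSpace ℝ ι) :
    qform M (c • v) = c ^ 2 * qform M v := by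
  simp only [qform, map_smul, real_inner_smul_left, real_inner_smul_right]
  ring

lemma qform_eq_dotProduct (M : Matrix ι ι ℝ) (v : EuclideanSpace ℝ ι) :
    qform M v = star v.ofLp ⬝ᵥ (M *ᵥ v.ofLp) := by
  simp [qform, dotProduct, PiLp.inner_apply, mul_comm]

lemma bddBelow_qform_sphere (M : Matrix ι ι ℝ) :
    BddBelow (Set.range fun v : Metric.sphere (0 : EuclideanSpace ℝ ι) 1 => qform M v) := by
  have hcont : Continuous (qform M) :=
    (toEuclideanLin M).continuous_of_finiteDimensional.inner continuous_id
  rw [← Set.image_eq_range]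
  exact ((isCompact_sphere 0 1).image hcont).bddBelow

lemma lambdaMin_mul_norm_sq_le_qform (M : Matrix ι ι ℝ) (v : EuclideanSpace ℝ ι) :
    lambdaMin M * ‖v‖ ^ 2 ≤ qform M v := by
  rcases eq_or_ne v 0 with rfl | hv
  · simp [qform]
  have hv' : ‖v‖ ≠ 0 := norm_ne_zero_iff.2 hv
  have hunit : ‖v‖⁻¹ • v ∈ Metric.sphere (0 : EuclideanSpace ℝ ι) 1 := by
    simp [norm_smul, hv']
  have hle : lambdaMin M ≤ (‖v‖⁻¹) ^ 2 * qform M v :=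
    qform_smul M _ v ▸ ciInf_le (bddBelow_qform_sphere M) ⟨_, hunit⟩
  calc lambdaMin M * ‖v‖ ^ 2 ≤ (‖v‖⁻¹) ^ 2 * qform M v * ‖v‖ ^ 2 := by gcongr
    _ = qform M v := by field_simp

lemma lambdaMin_nonneg_of_posSemidef {M : Matrix ι ι ℝ} (hM : M.PosSemidef) :
    0 ≤ lambdaMin M :=
  Real.iInf_nonneg fun v => qform_eq_dotProduct M v ▸ hM.dotProduct_mulVec_nonneg _

end lambdaMin

lemma inner_toEuclideanLin_transpose {ι κ : Type*} [Fintype ι] [Fintype κ] [DecidableEq ι]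
    [DecidableEq κ] (A : Matrix κ ι ℝ) (u : EuclideanSpace ℝ κ) (v : EuclideanSpace ℝ ι) :
    inner ℝ (toEuclideanLin Aᵀ u) v = inner ℝ u (toEuclideanLin A v) := by
  rw [← conjTranspose_eq_transpose_of_trivial, toEuclideanLin_conjTranspose_eq_adjoint,
    LinearMap.adjoint_inner_left]

lemma qform_transpose_mul_self {ι κ : Type*} [Fintype ι] [Fintype κ] [DecidableEq ι]
    [DecidableEq κ] (A : Matrix κ ι ℝ) (v : EuclideanSpace ℝ ι) :
    qform (Aᵀ * A) v = ‖toEuclideanLin A v‖ ^ 2 := by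
  have hmul : toEuclideanLin (Aᵀ * A) v = toEuclideanLin Aᵀ (toEuclideanLin A v) := by
    simp [toLpLin_apply, mulVec_mulVec]
  rw [qform, hmul, inner_toEuclideanLin_transpose, real_inner_self_eq_norm_sq]

lemma norm_toEuclideanLin_le_opNorm {m n : ℕ} (A : Matrix (Fin m) (Fin n) ℝ) (v : Evec n) :
    ‖toEuclideanLin A v‖ ≤ opNorm A * ‖v‖ :=
  (toEuclideanLin A).toContinuousLinearMap.le_opNorm v

lemma sq_add_sq_sub_pos_of_mul_sq_lt_one {τ σ c a b : ℝ} (hτ : 0 < τ) (hσ : 0 < σ)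
    (h : τ * σ * c ^ 2 < 1) (hab : a ≠ 0 ∨ b ≠ 0) :
    0 < τ⁻¹ * a ^ 2 + σ⁻¹ * b ^ 2 - 2 * c * a * b := by
  have hsquare : τ * (τ⁻¹ * a ^ 2 + σ⁻¹ * b ^ 2 - 2 * c * a * b) =
      (a - c * τ * b) ^ 2 + τ / σ * (1 - τ * σ * c ^ 2) * b ^ 2 := by
    field_simp
    ring
  refine pos_of_mul_pos_right (hsquare ▸ ?_) hτ.le
  rcases eq_or_ne b 0 with rfl | hb
  · simpa [sq_pos_iff] using hab.resolve_right (not_not.2 rfl)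
  · have : 0 < τ / σ * (1 - τ * σ * c ^ 2) * b ^ 2 := by
      have := sub_pos.2 h
      positivity
    positivity

section Phi

variable {n m : ℕ}

def phiOp (τ σ : ℝ) (A : Matrix (Fin m) (Fin n) ℝ) (p : Evec n × Evec m) : Evec n × Evec m :=
  (τ⁻¹ • p.1 - toEuclideanLin Aᵀ p.2, σ⁻¹ • p.2 - toEuclideanLin A p.1)

lemma wPhi_eq_inner_phiOp (τ σ : ℝ) (A : Matrix (Fin m) (Fin n) ℝ) (u v : Evec n × Evec m) :
    wPhi τ σ A u v = inner ℝ (phiOp τ σ A u).1 v.1 + inner ℝ (phiOp τ σ A u).2 v.2 :=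
  rfl

lemma phiOp_sub (τ σ : ℝ) (A : Matrix (Fin m) (Fin n) ℝ) (u v : Evec n × Evec m) :
    phiOp τ σ A (u - v) = phiOp τ σ A u - phiOp τ σ A v := by
  ext1 <;> simp only [phiOp, Prod.fst_sub, Prod.snd_sub, smul_sub, map_sub] <;> abel

lemma wPhi_apply (τ σ : ℝ) (A : Matrix (Fin m) (Fin n) ℝ) (u v : Evec n × Evec m) :
    wPhi τ σ A u v = τ⁻¹ * inner ℝ u.1 v.1 + σ⁻¹ * inner ℝ u.2 v.2
      - inner ℝ u.2 (toEuclideanLin A v.1) - inner ℝ (toEuclideanLin A u.1) v.2 := by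
  rw [wPhi, inner_sub_left, inner_sub_left, real_inner_smul_left, real_inner_smul_left,
    inner_toEuclideanLin_transpose]
  ring

lemma wPhi_comm (τ σ : ℝ) (A : Matrix (Fin m) (Fin n) ℝ) (u v : Evec n × Evec m) :
    wPhi τ σ A u v = wPhi τ σ A v u := by
  rw [wPhi_apply, wPhi_apply, real_inner_comm v.1, real_inner_comm v.2,
    real_inner_comm v.2 (toEuclideanLin A u.1), real_inner_comm (toEuclideanLin A v.1)]
  ring

lemma wPhi_add_left (τ σ : ℝ) (A : Matrix (Fin m) (Fin n) ℝ) (u w v : Evec n × Evec m) :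
    wPhi τ σ A (u + w) v = wPhi τ σ A u v + wPhi τ σ A w v := by
  simp only [wPhi_apply, Prod.fst_add, Prod.snd_add, inner_add_left, map_add]
  ring

lemma wPhi_add_self (τ σ : ℝ) (A : Matrix (Fin m) (Fin n) ℝ) (u v : Evec n × Evec m) :
    wPhi τ σ A (u + v) (u + v) = wPhi τ σ A u u + 2 * wPhi τ σ A v u + wPhi τ σ A v v := by
  rw [wPhi_add_left, wPhi_comm τ σ A u, wPhi_comm τ σ A v, wPhi_add_left, wPhi_add_left,
    wPhi_comm τ σ A u v]
  ring

lemma wPhi_self_pos {τ σ : ℝ} (hτ : 0 < τ) (hσ : 0 < σ) {A : Matrix (Fin m) (Fin n) ℝ}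
    (hstep : τ * σ * opNorm A ^ 2 < 1) {p : Evec n × Evec m} (hp : p ≠ 0) :
    0 < wPhi τ σ A p p := by
  have hcross : inner ℝ (toEuclideanLin A p.1) p.2 ≤ opNorm A * ‖p.1‖ * ‖p.2‖ :=
    (real_inner_le_norm _ _).trans (by gcongr; exact norm_toEuclideanLin_le_opNorm A p.1)
  have hnorm : ‖p.1‖ ≠ 0 ∨ ‖p.2‖ ≠ 0 := by
    by_contra! h
    exact hp (Prod.ext (norm_eq_zero.1 h.1) (norm_eq_zero.1 h.2))
  have := sq_add_sq_sub_pos_of_mul_sq_lt_one hτ hσ hstep hnorm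
  rw [wPhi_apply, real_inner_self_eq_norm_sq, real_inner_self_eq_norm_sq,
    real_inner_comm (toEuclideanLin A p.1) p.2]
  linarith

lemma wPhi_eq_inner_of_phiOp_eq {τ σ : ℝ} {A : Matrix (Fin m) (Fin n) ℝ}
    {r z : Evec n × Evec m} {g : Evec n}
    (h : phiOp τ σ A r = (g + toEuclideanLin Aᵀ z.2, -toEuclideanLin A z.1)) :
    wPhi τ σ A r z = inner ℝ g z.1 := by
  rw [wPhi_eq_inner_phiOp, h, inner_add_left, inner_neg_left, inner_toEuclideanLin_transpose,
    real_inner_comm z.2]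
  ring

end Phi

section Block

variable {n m : ℕ}

lemma inner_sumEquivProd_symm (p q : Evec n × Evec m) :
    inner ℝ (EuclideanSpace.sumEquivProd.symm p) (EuclideanSpace.sumEquivProd.symm q) =
      inner ℝ p.1 q.1 + inner ℝ p.2 q.2 := by
  simp [PiLp.inner_apply]

lemma toEuclideanLin_PhiMat (τ σ : ℝ) (A : Matrix (Fin m) (Fin n) ℝ) (p : Evec n × Evec m) :
    toEuclideanLin (PhiMat τ σ A) (EuclideanSpace.sumEquivProd.symm p) =
      EuclideanSpace.sumEquivProd.symm (phiOp τ σ A p) := by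
  ext (i | i)
  · change (PhiMat τ σ A *ᵥ Sum.elim p.1.ofLp p.2.ofLp) (.inl i) = (phiOp τ σ A p).1 i
    simp [PhiMat, phiOp, fromBlocks_mulVec, neg_mulVec, smul_mulVec, toLpLin_apply,
      sub_eq_add_neg, add_comm]
  · change (PhiMat τ σ A *ᵥ Sum.elim p.1.ofLp p.2.ofLp) (.inr i) = (phiOp τ σ A p).2 i
    simp [PhiMat, phiOp, fromBlocks_mulVec, neg_mulVec, smul_mulVec, toLpLin_apply,
      sub_eq_add_neg, add_comm]

lemma qform_PhiMat (τ σ : ℝ) (A : Matrix (Fin m) (Fin n) ℝ) (p : Evec n × Evec m) :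
    qform (PhiMat τ σ A) (EuclideanSpace.sumEquivProd.symm p) = wPhi τ σ A p p := by
  rw [qform, toEuclideanLin_PhiMat, inner_sumEquivProd_symm, wPhi_eq_inner_phiOp]

lemma posDef_PhiMat {τ σ : ℝ} (hτ : 0 < τ) (hσ : 0 < σ) {A : Matrix (Fin m) (Fin n) ℝ}
    (hstep : τ * σ * opNorm A ^ 2 < 1) : (PhiMat τ σ A).PosDef := by
  have hherm : (PhiMat τ σ A).IsHermitian :=
    IsHermitian.fromBlocks (by simp [IsHermitian]) (by simp) (by simp [IsHermitian])
  refine posDef_iff_dotProduct_mulVec.2 ⟨hherm, fun x hx => ?_⟩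
  have hp : EuclideanSpace.sumEquivProd (WithLp.toLp 2 x) ≠ 0 :=
    (ContinuousLinearEquiv.map_eq_zero_iff _).not.2 (by simpa using hx)
  have h := wPhi_self_pos hτ hσ hstep hp
  rwa [← qform_PhiMat, ContinuousLinearEquiv.symm_apply_apply, qform_eq_dotProduct] at h

lemma lambdaMin_inv_PhiMat_mul_le_wPhi {τ σ : ℝ} (hτ : 0 < τ) (hσ : 0 < σ)
    {A : Matrix (Fin m) (Fin n) ℝ} (hstep : τ * σ * opNorm A ^ 2 < 1) (r : Evec n × Evec m) :
    lambdaMin (PhiMat τ σ A)⁻¹ * (‖(phiOp τ σ A r).1‖ ^ 2 + ‖(phiOp τ σ A r).2‖ ^ 2) ≤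
      wPhi τ σ A r r := by
  have hinv : (PhiMat τ σ A)⁻¹ * PhiMat τ σ A = 1 :=
    nonsing_inv_mul _ ((isUnit_iff_isUnit_det _).1 (posDef_PhiMat hτ hσ hstep).isUnit)
  set v := EuclideanSpace.sumEquivProd.symm r
  have hcancel : toEuclideanLin (PhiMat τ σ A)⁻¹ (toEuclideanLin (PhiMat τ σ A) v) = v := by
    simp [toLpLin_apply, mulVec_mulVec, hinv]
  have hq : qform (PhiMat τ σ A)⁻¹ (EuclideanSpace.sumEquivProd.symm (phiOp τ σ A r)) =
      wPhi τ σ A r r := by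
    rw [← toEuclideanLin_PhiMat, qform, hcancel, real_inner_comm, ← qform, qform_PhiMat]
  have hnorm : ‖EuclideanSpace.sumEquivProd.symm (phiOp τ σ A r)‖ ^ 2 =
      ‖(phiOp τ σ A r).1‖ ^ 2 + ‖(phiOp τ σ A r).2‖ ^ 2 := by
    simp only [← real_inner_self_eq_norm_sq, inner_sumEquivProd_symm]
  rw [← hnorm, ← hq]
  exact lambdaMin_mul_norm_sq_le_qform _ _

lemma lambdaMin_mul_lambdaMin_mul_le_wPhi {τ σ : ℝ} (hτ : 0 < τ) (hσ : 0 < σ)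
    {A : Matrix (Fin m) (Fin n) ℝ} (hstep : τ * σ * opNorm A ^ 2 < 1) {r : Evec n × Evec m}
    {x : Evec n} (h : (phiOp τ σ A r).2 = -toEuclideanLin A x) :
    lambdaMin (PhiMat τ σ A)⁻¹ * lambdaMin (Aᵀ * A) * ‖x‖ ^ 2 ≤ wPhi τ σ A r r := by
  have hΦinv : 0 ≤ lambdaMin (PhiMat τ σ A)⁻¹ :=
    lambdaMin_nonneg_of_posSemidef (posDef_PhiMat hτ hσ hstep).posSemidef.inv
  calc _ ≤ lambdaMin (PhiMat τ σ A)⁻¹ * ‖toEuclideanLin A x‖ ^ 2 := by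
        rw [mul_assoc, ← qform_transpose_mul_self]
        exact mul_le_mul_of_nonneg_left (lambdaMin_mul_norm_sq_le_qform _ _) hΦinv
    _ ≤ lambdaMin (PhiMat τ σ A)⁻¹ * (‖(phiOp τ σ A r).1‖ ^ 2 + ‖(phiOp τ σ A r).2‖ ^ 2) := by
        rw [h, norm_neg]
        gcongr
        exact le_add_of_nonneg_left (sq_nonneg _)
    _ ≤ wPhi τ σ A r r := lambdaMin_inv_PhiMat_mul_le_wPhi hτ hσ hstep r

end Block

theorem backward_step_partial_contraction_general
    (n m : ℕ) (τ σ μf : ℝ) (hτ : 0 < τ) (hσ : 0 < σ)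
    (A : Matrix (Fin m) (Fin n) ℝ)
    (hstep : τ * σ * (opNorm A) ^ 2 < 1)
    (f : Evec n → EReal)
    (hfsmono : ∀ x x' v v', v ∈ subdiff f x → v' ∈ subdiff f x' →
      μf * ‖x - x'‖ ^ 2 ≤ (inner ℝ (v - v') (x - x') : ℝ))
    (J : Evec n × Evec m → Evec n × Evec m)
    (hJ : ∀ ω : Evec n × Evec m,
      (τ⁻¹ • (ω.1 - (J ω).1) - Matrix.toEuclideanLin Aᵀ (ω.2 - (J ω).2) -
          Matrix.toEuclideanLin Aᵀ (J ω).2 ∈ subdiff f (J ω).1) ∧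
      (σ⁻¹ • (ω.2 - (J ω).2) - Matrix.toEuclideanLin A (ω.1 - (J ω).1) =
        -(Matrix.toEuclideanLin A (J ω).1))) :
    ∀ ω ω' : Evec n × Evec m,
      wPhi τ σ A (J ω - J ω') (J ω - J ω') +
          (lambdaMin ((PhiMat τ σ A)⁻¹) * lambdaMin (Aᵀ * A) + 2 * μf) *
            ‖(J ω - J ω').1‖ ^ 2 ≤
        wPhi τ σ A (ω - ω') (ω - ω') := by
  intro ω ω'
  -- `hJ ω` says `Φ (ω - Jω) ∈ F_b (Jω)`; `g ω` is the subgradient it selects.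
  set g : Evec n × Evec m → Evec n := fun ω =>
    (phiOp τ σ A (ω - J ω)).1 - toEuclideanLin Aᵀ (J ω).2
  have hphi (ω) : phiOp τ σ A (ω - J ω) = (g ω + toEuclideanLin Aᵀ (J ω).2,
      -toEuclideanLin A (J ω).1) := Prod.ext (sub_add_cancel _ _).symm (hJ ω).2
  set δ := J ω - J ω'
  set r := (ω - J ω) - (ω' - J ω')
  have hr : phiOp τ σ A r = (g ω - g ω' + toEuclideanLin Aᵀ δ.2, -toEuclideanLin A δ.1) := by
    rw [phiOp_sub, hphi, hphi]
    ext1 <;> simp only [Prod.fst_sub, Prod.snd_sub, map_sub, δ] <;> abel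
  have hcross : μf * ‖δ.1‖ ^ 2 ≤ wPhi τ σ A r δ :=
    wPhi_eq_inner_of_phiOp_eq hr ▸ hfsmono _ _ _ _ (hJ ω).1 (hJ ω').1
  have hres : lambdaMin (PhiMat τ σ A)⁻¹ * lambdaMin (Aᵀ * A) * ‖δ.1‖ ^ 2 ≤ wPhi τ σ A r r :=
    lambdaMin_mul_lambdaMin_mul_le_wPhi hτ hσ hstep (congrArg Prod.snd hr)
  rw [show ω - ω' = δ + r by simp only [δ, r]; abel, wPhi_add_self]
  linarith

/-- Partial contractivity of the backward step of the semi-implicit primal-dual method: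
for the resolvent `J = (Id + Φ_{τ,σ}⁻¹ F_b)⁻¹` of `F_b(x,y) = (∂f(x)+Aᵀy, -Ax)`, one has
`‖J(ω)-J(ω')‖²_{Φ+Ψ_b} ≤ ‖ω-ω'‖²_Φ` with `Ψ_b = diag(γ_x Iₙ, 0)`,
`γ_x = λ_min(Φ⁻¹)λ_min(AᵀA) + 2μ_f`. -/
theorem backward_step_partial_contraction
    (n m : ℕ) (τ σ μf : ℝ) (hτ : 0 < τ) (hσ : 0 < σ) (hμf : 0 ≤ μf)
    (A : Matrix (Fin m) (Fin n) ℝ)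
    (hstep : τ * σ * (opNorm A) ^ 2 < 1)
    (f : Evec n → EReal)
    (hproper : (∀ x, f x ≠ ⊥) ∧ ∃ x, f x ≠ ⊤)
    (hconv : ∀ x y (t : ℝ), 0 ≤ t → t ≤ 1 →
      f (t • x + (1 - t) • y) ≤ (t : EReal) * f x + ((1 - t : ℝ) : EReal) * f y)
    (hclosed : LowerSemicontinuous f)
    (hfsmono : ∀ x x' v v', v ∈ subdiff f x → v' ∈ subdiff f x' →
      μf * ‖x - x'‖ ^ 2 ≤ (inner ℝ (v - v') (x - x') : ℝ))
    (J : Evec n × Evec m → Evec n × Evec m)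
    (hJ : ∀ ω : Evec n × Evec m,
      (τ⁻¹ • (ω.1 - (J ω).1) - Matrix.toEuclideanLin Aᵀ (ω.2 - (J ω).2) -
          Matrix.toEuclideanLin Aᵀ (J ω).2 ∈ subdiff f (J ω).1) ∧
      (σ⁻¹ • (ω.2 - (J ω).2) - Matrix.toEuclideanLin A (ω.1 - (J ω).1) =
        -(Matrix.toEuclideanLin A (J ω).1))) :
    ∀ ω ω' : Evec n × Evec m,
      wPhi τ σ A (J ω - J ω') (J ω - J ω') +
          (lambdaMin ((PhiMat τ σ A)⁻¹) * lambdaMin (Aᵀ * A) + 2 * μf) *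
            ‖(J ω - J ω').1‖ ^ 2 ≤
        wPhi τ σ A (ω - ω') (ω - ω') :=
  backward_step_partial_contraction_general n m τ σ μf hτ hσ A hstep f hfsmono J hJ
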